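/- arXiv:2406.09243 — 3 statements merged into one kernel-verified Lean document; each statement's English description precedes it below -/
import Mathlib

section
/- Let r ≥ 2 and let b : ℕ^r → ℂ be a bounded function. Then for all N ≥ 1 and all 1 ≤ D ≤ N, (1/N^r) ∑_{m ∈ [N]^r, gcd(m)=1} b(m) = ∑_{d=1}^{D} (μ(d)/d^r) · 𝔼_{m ∈ [N/d]^r} b(d·m) + O(1/D^{r-1}) + O((log N)/N), where the implied constants depend only on b. -/
open Filter Finset Real ArithmeticFunction

/-- The box `[a]^r` of lattice points with coordinates in `{1, …, a}`. -/
def box (r a : ℕ) : Finset (Fin r → ℕ) := Fintype.piFinset fun _ => Finset.Icc 1 a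

/-!
Möbius inversion over a common divisor `d` of the coordinates gives
`∑_{m ∈ [N]^r, gcd m = 1} b m = ∑_{d ≤ N} μ(d) ∑_{m ∈ [N/d]^r} b (d • m)`, and the `d`-th inner sum
is `⌊N/d⌋^r` times the average in the statement. After division by `N^r` the `d`-th average thus
carries the weight `(⌊N/d⌋/N)^r` instead of `d^{-r}`. Since `0 ≤ 1/d - ⌊N/d⌋/N ≤ 1/N`, the two
weights differ by at most `r/(N d^{r-1}) ≤ r/(N d)`, which summed over `d ≤ D` is `O(log N / N)`;
the terms with `d > D` are at most `B d^{-r}`, and telescoping against `d^{1-r}` bounds their sum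
by `D^{1-r}`.
-/

open scoped ArithmeticFunction.Moebius

lemma mem_box_iff {r a : ℕ} {m : Fin r → ℕ} : m ∈ box r a ↔ ∀ i, 1 ≤ m i ∧ m i ≤ a := by
  simp [_root_.box]

lemma card_box_eq (r a : ℕ) : (box r a).card = a ^ r := by
  simp [_root_.box]

lemma sum_moebius_divisors_eq_ite {R : Type*} [Ring R] (n : ℕ) :
    ∑ d ∈ n.divisors, (μ d : R) = if n = 1 then 1 else 0 := by
  simpa only [coe_mul_zeta_apply, one_apply, intCoe_apply] using
    congrArg (· n) (coe_moebius_mul_coe_zeta (R := R))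

lemma sum_box_filter_dvd {M : Type*} [AddCommMonoid M] (r N : ℕ) {d : ℕ} (hd : 0 < d)
    (f : (Fin r → ℕ) → M) :
    ∑ m ∈ (box r N).filter (fun m => ∀ i, d ∣ m i), f m
      = ∑ m ∈ box r (N / d), f (fun i => d * m i) := by
  refine sum_nbij' (fun m i => m i / d) (fun m i => d * m i) ?_ ?_ ?_ ?_ ?_ <;>
    intro m hm <;> simp only [mem_filter, mem_box_iff] at hm ⊢
  · exact fun i => ⟨(Nat.one_le_div_iff hd).2 (Nat.le_of_dvd (hm.1 i).1 (hm.2 i)),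
      Nat.div_le_div_right (hm.1 i).2⟩
  · exact ⟨fun i => ⟨Nat.mul_pos hd (hm i).1, (Nat.mul_comm _ _).trans_le
      ((Nat.le_div_iff_mul_le hd).1 (hm i).2)⟩, fun i => dvd_mul_right d _⟩
  · exact funext fun i => Nat.mul_div_cancel' (hm.2 i)
  · exact funext fun i => Nat.mul_div_cancel_left _ hd
  · exact congrArg f (funext fun i => (Nat.mul_div_cancel' (hm.2 i)).symm)

lemma sum_box_gcd_eq_one {R : Type*} [Ring R] {r : ℕ} (hr : 0 < r) (N : ℕ)
    (b : (Fin r → ℕ) → R) :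
    ∑ m ∈ (box r N).filter (fun m => univ.gcd m = 1), b m
      = ∑ d ∈ Icc 1 N, (μ d : R) * ∑ m ∈ box r (N / d), b (fun i => d * m i) := by
  let i₀ : Fin r := ⟨0, hr⟩
  calc ∑ m ∈ (box r N).filter (fun m => univ.gcd m = 1), b m
      = ∑ m ∈ box r N, ∑ d ∈ (univ.gcd m).divisors, (μ d : R) * b m := by
        rw [sum_filter]
        refine sum_congr rfl fun m _ => ?_
        rw [← sum_mul, sum_moebius_divisors_eq_ite]
        split_ifs <;> simp
    _ = ∑ d ∈ Icc 1 N, ∑ m ∈ (box r N).filter (fun m => ∀ i, d ∣ m i), (μ d : R) * b m := by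
        refine sum_comm' fun m d => ?_
        simp only [mem_filter, Nat.mem_divisors, mem_Icc, Finset.dvd_gcd_iff, mem_univ, true_implies,
          mem_box_iff, ne_eq, Finset.gcd_eq_zero_iff]
        constructor
        · rintro ⟨hm, hdm, -⟩
          have hd := Nat.le_of_dvd (hm i₀).1 (hdm i₀)
          exact ⟨⟨hm, hdm⟩, Nat.pos_of_dvd_of_pos (hdm i₀) (hm i₀).1, hd.trans (hm i₀).2⟩
        · rintro ⟨⟨hm, hdm⟩, -⟩
          exact ⟨hm, hdm, fun h => (Nat.one_le_iff_ne_zero.1 (hm i₀).1) (h i₀)⟩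
    _ = ∑ d ∈ Icc 1 N, (μ d : R) * ∑ m ∈ box r (N / d), b (fun i => d * m i) := by
        refine sum_congr rfl fun d hd => ?_
        rw [← mul_sum, sum_box_filter_dvd r N (mem_Icc.1 hd).1]

lemma sum_eq_card_mul_sum_div_card {ι K : Type*} [Field K] [CharZero K]
    (s : Finset ι) (f : ι → K) : ∑ i ∈ s, f i = s.card * ((∑ i ∈ s, f i) / s.card) := by
  rcases s.eq_empty_or_nonempty with rfl | hs
  · simp
  · exact (mul_div_cancel₀ _ (Nat.cast_ne_zero.2 hs.card_ne_zero)).symm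

lemma norm_sum_div_card_le {ι 𝕜 : Type*} [RCLike 𝕜] {s : Finset ι} {f : ι → 𝕜} {B : ℝ}
    (hB : 0 ≤ B) (hf : ∀ i ∈ s, ‖f i‖ ≤ B) : ‖(∑ i ∈ s, f i) / s.card‖ ≤ B := by
  rcases s.eq_empty_or_nonempty with rfl | hs
  · simpa using hB
  · rw [norm_div, RCLike.norm_natCast, div_le_iff₀ (by exact_mod_cast hs.card_pos)]
    simpa [mul_comm] using norm_sum_le_of_le s hf

lemma one_div_pow_mul_sum_box_gcd_eq_one {r : ℕ} (hr : 0 < r) (N : ℕ) (b : (Fin r → ℕ) → ℂ) :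
    (1 / (N : ℂ) ^ r) * ∑ m ∈ (box r N).filter (fun m => univ.gcd m = 1), b m
      = ∑ d ∈ Icc 1 N, (((μ d : ℝ) * (((N / d : ℕ) : ℝ) / N) ^ r : ℝ) : ℂ) *
          ((∑ m ∈ box r (N / d), b (fun i => d * m i)) / ((box r (N / d)).card : ℂ)) := by
  rw [sum_box_gcd_eq_one hr, mul_sum]
  refine sum_congr rfl fun d _ => ?_
  have hS : ∑ m ∈ box r (N / d), b (fun i => d * m i) = ((N / d : ℕ) : ℂ) ^ r *
      ((∑ m ∈ box r (N / d), b (fun i => d * m i)) / ((box r (N / d)).card : ℂ)) := by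
    rw [← Nat.cast_pow, ← card_box_eq]
    exact sum_eq_card_mul_sum_div_card _ _
  conv_lhs => rw [hS]
  push_cast
  ring

lemma floor_div_div_le {N d : ℕ} (hd : 0 < d) :
    ((N / d : ℕ) : ℝ) / N ≤ 1 / d := by
  rcases N.eq_zero_or_pos with rfl | hN
  · simp
  rw [div_le_div_iff₀ (by exact_mod_cast hN) (by exact_mod_cast hd), one_mul]
  exact_mod_cast Nat.div_mul_le_self N d

lemma one_div_sub_floor_div_div_le {N d : ℕ} (hN : 0 < N) (hd : 0 < d) :
    1 / (d : ℝ) - ((N / d : ℕ) : ℝ) / N ≤ 1 / N := by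
  have hlt : N < (N / d + 1) * d := by
    have := Nat.div_add_mod N d
    have := Nat.mod_lt N hd
    nlinarith
  rw [div_sub_div _ _ (by positivity) (by positivity), div_le_div_iff₀ (by positivity)
    (by positivity)]
  have : (N : ℝ) < ((N / d : ℕ) + 1) * d := by exact_mod_cast hlt
  nlinarith

lemma abs_floor_div_div_pow_sub_le {N d : ℕ} (hN : 0 < N) (hd : 0 < d) (r : ℕ) :
    |(((N / d : ℕ) : ℝ) / N) ^ r - (1 / d) ^ r| ≤ r / N * (1 / d) ^ (r - 1) := by
  have hx : 0 ≤ ((N / d : ℕ) : ℝ) / N := by positivity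
  have hxy := floor_div_div_le (N := N) hd
  refine (abs_pow_sub_pow_le _ _ r).trans ?_
  rw [abs_sub_comm, abs_of_nonneg (sub_nonneg.2 hxy), abs_of_nonneg hx,
    abs_of_nonneg (by positivity), max_eq_right hxy, mul_comm _ (r : ℝ), div_eq_mul_one_div (r : ℝ)]
  gcongr
  exact one_div_sub_floor_div_div_le hN hd

lemma norm_moebius_weight_sub_mul_le {r N d : ℕ} (hr : 2 ≤ r) (hN : 0 < N) (hd : 0 < d)
    {z : ℂ} {B : ℝ} (hz : ‖z‖ ≤ B) :
    ‖(((μ d : ℝ) * (((N / d : ℕ) : ℝ) / N) ^ r : ℝ) : ℂ) * z - (μ d : ℂ) / (d : ℂ) ^ r * z‖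
      ≤ B * (r / N) * (1 / d) := by
  have hdiff : (((μ d : ℝ) * (((N / d : ℕ) : ℝ) / N) ^ r : ℝ) : ℂ) * z - (μ d : ℂ) / (d : ℂ) ^ r * z
      = (((μ d : ℝ) * ((((N / d : ℕ) : ℝ) / N) ^ r - (1 / d) ^ r) : ℝ) : ℂ) * z := by
    push_cast
    ring
  rw [hdiff, norm_mul, Complex.norm_real, Real.norm_eq_abs, abs_mul]
  calc |(μ d : ℝ)| * |(((N / d : ℕ) : ℝ) / N) ^ r - (1 / d) ^ r| * ‖z‖
      ≤ 1 * (r / N * (1 / d) ^ (r - 1)) * B := by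
        gcongr
        exacts [by exact_mod_cast abs_moebius_le_one, abs_floor_div_div_pow_sub_le hN hd r]
    _ ≤ B * (r / N) * (1 / d) := by
        rw [one_mul, mul_comm, ← mul_assoc]
        have hB : 0 ≤ B := (norm_nonneg z).trans hz
        gcongr
        exact pow_le_of_le_one (by positivity)
          (div_le_one_of_le₀ (by exact_mod_cast hd) (by positivity)) (by omega)

lemma norm_moebius_weight_mul_le {r N d : ℕ} (hd : 0 < d) {z : ℂ} {B : ℝ} (hz : ‖z‖ ≤ B) :
    ‖(((μ d : ℝ) * (((N / d : ℕ) : ℝ) / N) ^ r : ℝ) : ℂ) * z‖ ≤ B * (1 / (d : ℝ) ^ r) := by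
  have hw : (0 : ℝ) ≤ (((N / d : ℕ) : ℝ) / N) ^ r := by positivity
  rw [norm_mul, Complex.norm_real, Real.norm_eq_abs, abs_mul, abs_of_nonneg hw, ← one_div_pow]
  calc |(μ d : ℝ)| * (((N / d : ℕ) : ℝ) / N) ^ r * ‖z‖ ≤ 1 * (1 / d) ^ r * B := by
        gcongr ?_ * ?_ ^ r * ?_
        exacts [by exact_mod_cast abs_moebius_le_one, floor_div_div_le hd]
    _ = B * (1 / d) ^ r := by ring

lemma pow_mul_add_two_le_pow_succ {x : ℝ} (hx : 0 ≤ x) {k : ℕ} (hk : 1 ≤ k) :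
    x ^ k * (x + 2) ≤ (x + 1) ^ (k + 1) := by
  induction k, hk using Nat.le_induction with
  | base => ring_nf; linarith
  | succ k _ ih =>
    calc x ^ (k + 1) * (x + 2) = x * (x ^ k * (x + 2)) := by ring
      _ ≤ (x + 1) * (x + 1) ^ (k + 1) := by gcongr; linarith
      _ = (x + 1) ^ (k + 1 + 1) := by ring

lemma one_div_succ_pow_le_sub {x : ℝ} (hx : 0 < x) {k : ℕ} (hk : 1 ≤ k) :
    1 / (x + 1) ^ (k + 1) ≤ 1 / x ^ k - 1 / (x + 1) ^ k := by
  rw [div_sub_div _ _ (by positivity) (by positivity), div_le_div_iff₀ (by positivity)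
    (by positivity)]
  have := pow_mul_add_two_le_pow_succ hx.le hk
  have e : (x + 1) ^ (k + 1) = (x + 1) ^ k * (x + 1) := pow_succ _ _
  rw [e]
  nlinarith [pow_pos hx k, pow_pos (by linarith : 0 < x + 1) k]

lemma sum_Ioc_one_div_pow_le {r D : ℕ} (hr : 2 ≤ r) (hD : 0 < D) (N : ℕ) :
    ∑ d ∈ Ioc D N, 1 / (d : ℝ) ^ r ≤ 1 / (D : ℝ) ^ (r - 1) := by
  obtain ⟨k, rfl⟩ : ∃ k, r = k + 1 := ⟨r - 1, by omega⟩
  rw [Nat.add_sub_cancel]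
  rcases le_or_gt N D with hND | hDN
  · rw [Ioc_eq_empty_of_le hND, sum_empty]
    positivity
  suffices ∀ N, D ≤ N → ∑ d ∈ Ioc D N, 1 / (d : ℝ) ^ (k + 1) ≤ 1 / (D : ℝ) ^ k - 1 / (N : ℝ) ^ k by
    linarith [this N hDN.le, show 0 ≤ 1 / (N : ℝ) ^ k by positivity]
  intro N hN
  induction N, hN using Nat.le_induction with
  | base => simp
  | succ n hn ih =>
    rw [sum_Ioc_succ_top hn]
    have := one_div_succ_pow_le_sub (x := n) (by exact_mod_cast hD.trans_le hn) (k := k) (by omega)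
    push_cast
    linarith

lemma sum_Icc_one_div_le {D N : ℕ} (hD : 1 ≤ D) (hDN : D ≤ N) :
    ∑ d ∈ Icc 1 D, 1 / (d : ℝ) ≤ 1 + Real.log N := by
  have h := harmonic_le_one_add_log D
  rw [harmonic_eq_sum_Icc] at h
  push_cast at h
  have := log_le_log (by exact_mod_cast hD) (show (D : ℝ) ≤ N by exact_mod_cast hDN)
  simp only [one_div]
  linarith

-- The term `1 / D ^ k` only serves the case `N = 1`, where `log N = 0`.
lemma one_add_log_div_le {D N : ℕ} (hD : 1 ≤ D) (hDN : D ≤ N) (k : ℕ) :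
    (1 + Real.log N) / N ≤ 3 * (Real.log N / N) + 1 / (D : ℝ) ^ k := by
  rcases (hD.trans hDN).eq_or_lt with hN | hN
  · obtain rfl : D = 1 := by omega
    simp [← hN]
  · have hN2 : (2 : ℝ) ≤ N := by exact_mod_cast hN
    have : 1 / 2 < Real.log N :=
      ((by norm_num : (1 / 2 : ℝ) < 0.6931471803).trans log_two_gt_d9).trans_le
        (log_le_log (by norm_num) hN2)
    have : (1 + Real.log N) / N ≤ 3 * (Real.log N / N) := by
      rw [mul_div_assoc']
      gcongr
      linarith
    linarith [show 0 ≤ 1 / (D : ℝ) ^ k by positivity]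

theorem stmt1 (r : ℕ) (hr : 2 ≤ r) (b : (Fin r → ℕ) → ℂ) (B : ℝ)
    (hb : ∀ m, ‖b m‖ ≤ B) :
    ∃ C : ℝ, ∀ N D : ℕ, 1 ≤ N → 1 ≤ D → D ≤ N →
      ‖(1 / (N : ℂ) ^ r) *
          (∑ m ∈ (box r N).filter (fun m => Finset.univ.gcd m = 1), b m) -
        ∑ d ∈ Finset.Icc 1 D, ((moebius d : ℤ) : ℂ) / (d : ℂ) ^ r *
          ((∑ m ∈ box r (N / d), b (fun i => d * m i)) / ((box r (N / d)).card : ℂ))‖ ≤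
      C * (1 / (D : ℝ) ^ (r - 1)) + C * (Real.log N / N) := by
  have hB : 0 ≤ B := (norm_nonneg _).trans (hb 0)
  refine ⟨(3 * r + 1) * B, fun N D hN hD hDN => ?_⟩
  have havg (d : ℕ) : ‖(∑ m ∈ box r (N / d), b (fun i => d * m i)) / ((box r (N / d)).card : ℂ)‖
      ≤ B := norm_sum_div_card_le hB fun m _ => hb _
  have hIoc (n : ℕ) : Icc 1 n = Ioc 0 n := Icc_succ_left_eq_Ioc 0 n
  rw [one_div_pow_mul_sum_box_gcd_eq_one (by omega), hIoc, hIoc,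
    ← sum_Ioc_consecutive _ D.zero_le hDN, add_sub_right_comm, ← sum_sub_distrib]
  calc _ ≤ ∑ d ∈ Ioc 0 D, B * (r / N) * (1 / d) + ∑ d ∈ Ioc D N, B * (1 / (d : ℝ) ^ r) :=
        norm_add_le_of_le
          (norm_sum_le_of_le _ fun d hd =>
            norm_moebius_weight_sub_mul_le hr (by omega) (mem_Ioc.1 hd).1 (havg d))
          (norm_sum_le_of_le _ fun d hd =>
            norm_moebius_weight_mul_le (by have := (mem_Ioc.1 hd).1; omega) (havg d))
    _ ≤ B * (r / N) * (1 + Real.log N) + B * (1 / (D : ℝ) ^ (r - 1)) := by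
        rw [← mul_sum, ← mul_sum, ← hIoc]
        gcongr
        exacts [sum_Icc_one_div_le hD hDN, sum_Ioc_one_div_pow_le hr (by omega) N]
    _ = B * r * ((1 + Real.log N) / N) + B * (1 / (D : ℝ) ^ (r - 1)) := by ring
    _ ≤ B * r * (3 * (Real.log N / N) + 1 / (D : ℝ) ^ (r - 1)) + B * (1 / (D : ℝ) ^ (r - 1)) := by
        gcongr
        exact one_add_log_div_le hD hDN (r - 1)
    _ ≤ (3 * r + 1) * B * (1 / (D : ℝ) ^ (r - 1)) + (3 * r + 1) * B * (Real.log N / N) := by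
        have hL : 0 ≤ Real.log N / N := by positivity
        have hE : 0 ≤ 1 / (D : ℝ) ^ (r - 1) := by positivity
        nlinarith [mul_nonneg hB hL, mul_nonneg (mul_nonneg hB (Nat.cast_nonneg r)) hE]
end

section
/- Let f : ℕ → ℝ be a bounded completely multiplicative function and let P ∈ ℤ[x,y] be a homogeneous polynomial of degree k with P(ℕ²) ⊆ ℕ. If the limit L' = lim_{N→∞} 𝔼_{1≤m,n≤N, gcd(m,n)=1} f(P(m,n)) exists, then the limit lim_{N→∞} 𝔼_{1≤m,n≤N} f(P(m,n)) exists and equals (6/π²) · (∑_{n=1}^∞ f(n)^k/n²) · L'. -/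
open Filter Finset Real

/-- The value `P(m,n)` of an integer polynomial in two variables at natural arguments,
as a natural number. -/
noncomputable def Pval (P : MvPolynomial (Fin 2) ℤ) (m n : ℕ) : ℕ :=
  (MvPolynomial.eval ![(m : ℤ), (n : ℤ)] P).toNat

/-!
Write a pair `(m, n)` as `(d * a, d * b)` with `d = gcd m n` and `a, b` coprime. Homogeneity of
`P` and complete multiplicativity of `f` give `f (P (m, n)) = f d ^ k * f (P (a, b))`, so the sum
over `[1, N]²` equals `∑ d ≤ N, f d ^ k * T (N / d)`, where `T M` is the sum over coprime pairs
in `[1, M]²`. Coprime pairs have density `∑ μ d / d² = 6 / π²`, hence `T M ~ (6 / π²) L' M²`, and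
since `f` is bounded the limit can be taken termwise in `d` by dominated convergence.
-/

open Topology ArithmeticFunction
open scoped ArithmeticFunction.Moebius ArithmeticFunction.zeta LSeries.notation

lemma Int.toNat_natCast_mul (n : ℕ) (z : ℤ) : ((n : ℤ) * z).toNat = n * z.toNat := by
  rcases le_total 0 z with hz | hz
  · rw [Int.toNat_mul (Int.natCast_nonneg n) hz, Int.toNat_natCast]
  · rw [Int.toNat_of_nonpos hz, mul_zero,
      Int.toNat_of_nonpos (mul_nonpos_of_nonneg_of_nonpos (Int.natCast_nonneg n) hz)]

lemma MvPolynomial.IsHomogeneous.eval_const_mul {σ R : Type*} [CommSemiring R] [Fintype σ]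
    {φ : MvPolynomial σ R} {n : ℕ} (hφ : φ.IsHomogeneous n) (c : R) (x : σ → R) :
    eval (fun i => c * x i) φ = c ^ n * eval x φ := by
  rw [eval_eq', eval_eq', Finset.mul_sum]
  refine Finset.sum_congr rfl fun d hd => ?_
  have hdeg : ∑ i, d i = n := by
    rw [← hφ (mem_support_iff.mp hd), Finsupp.weight_apply, Finsupp.sum_fintype _ _ (by simp)]
    simp
  simp_rw [mul_pow, Finset.prod_mul_distrib, Finset.prod_pow_eq_pow_sum, hdeg]
  ring

lemma Pval_mul_mul {k : ℕ} {P : MvPolynomial (Fin 2) ℤ} (hP : P.IsHomogeneous k) (d a b : ℕ) :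
    Pval P (d * a) (d * b) = d ^ k * Pval P a b := by
  have hscale : ![((d * a : ℕ) : ℤ), ((d * b : ℕ) : ℤ)]
      = fun i => (d : ℤ) * ![(a : ℤ), (b : ℤ)] i := by
    ext i; fin_cases i <;> simp
  rw [Pval, hscale, hP.eval_const_mul, ← Nat.cast_pow, Int.toNat_natCast_mul, Pval]

lemma map_pow_of_map_mul {f : ℕ → ℝ} (hf1 : f 1 = 1) (hfmul : ∀ m n, f (m * n) = f m * f n)
    (n j : ℕ) : f (n ^ j) = f n ^ j := by
  induction j with
  | zero => simpa using hf1
  | succ j ih => rw [pow_succ, pow_succ, hfmul, ih]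

lemma tendsto_natCast_div_div_self (d : ℕ) :
    Tendsto (fun N : ℕ => ((N / d : ℕ) : ℝ) / N) atTop (𝓝 (d : ℝ)⁻¹) := by
  refine ((tendsto_nat_floor_mul_div_atTop (inv_nonneg.mpr d.cast_nonneg)).comp
    tendsto_natCast_atTop_atTop).congr fun N => ?_
  simp [← Nat.floor_div_eq_div (K := ℝ), inv_mul_eq_div]

theorem tendsto_sum_mul_div_sq {a T : ℕ → ℝ} {A B l : ℝ} (ha : ∀ d, |a d| ≤ A)
    (hT : ∀ M, |T M| ≤ B * M ^ 2) (hl : Tendsto (fun M : ℕ => T M / M ^ 2) atTop (𝓝 l)) :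
    Tendsto (fun N : ℕ => (∑ d ∈ Icc 1 N, a d * T (N / d)) / N ^ 2) atTop
      (𝓝 ((∑' d : ℕ, a d / d ^ 2) * l)) := by
  have hT0 : T 0 = 0 := abs_nonpos_iff.mp (by simpa using hT 0)
  have hA : 0 ≤ A := (abs_nonneg _).trans (ha 0)
  have hB : 0 ≤ B := by simpa using (abs_nonneg _).trans (hT 1)
  have hsum : ∀ N : ℕ, (∑ d ∈ Icc 1 N, a d * T (N / d)) / N ^ 2
      = ∑' d : ℕ, a d * T (N / d) / N ^ 2 := by
    intro N
    rw [Finset.sum_div, tsum_eq_sum]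
    intro d hd
    -- outside `Icc 1 N` the argument `N / d` is `0`, where `T` vanishes
    have : N / d = 0 := by
      rcases Nat.eq_zero_or_pos d with rfl | hd0
      · simp
      · simp only [mem_Icc, not_and, not_le] at hd
        exact Nat.div_eq_of_lt (hd hd0)
    simp [this, hT0]
  simp_rw [hsum, ← tsum_mul_right]
  refine tendsto_tsum_of_dominated_convergence (bound := fun d : ℕ => A * B / d ^ 2)
    ((summable_one_div_nat_pow.mpr one_lt_two).mul_left (A * B) |>.congr fun d => by ring)
    (fun d => ?_) (Eventually.of_forall fun N d => ?_)
  · rcases Nat.eq_zero_or_pos d with rfl | hd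
    · simp [hT0]
    have hquot : Tendsto (fun N : ℕ => T (N / d) / ((N / d : ℕ) : ℝ) ^ 2) atTop (𝓝 l) :=
      hl.comp (Nat.tendsto_div_const_atTop hd.ne')
    have := (tendsto_const_nhds (x := a d)).mul (hquot.mul ((tendsto_natCast_div_div_self d).pow 2))
    convert this.congr' ?_ using 2
    · field_simp
    filter_upwards [eventually_ge_atTop d] with N hN
    have : (0 : ℝ) < (N / d : ℕ) := by exact_mod_cast Nat.div_pos hN hd
    field_simp
  · rcases Nat.eq_zero_or_pos d with rfl | hd
    · simp [hT0]
    rcases Nat.eq_zero_or_pos N with rfl | hN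
    · simp; positivity
    have hfloor : ((N / d : ℕ) : ℝ) ≤ N / d := Nat.cast_div_le
    calc ‖a d * T (N / d) / N ^ 2‖ = |a d| * |T (N / d)| / N ^ 2 := by
          rw [Real.norm_eq_abs, abs_div, abs_mul, abs_of_pos (by positivity : (0 : ℝ) < N ^ 2)]
      _ ≤ A * (B * (N / d) ^ 2) / N ^ 2 := by
          gcongr
          exacts [ha d, (hT _).trans (by gcongr)]
      _ = A * B / d ^ 2 := by field_simp

def coprimePairs (N : ℕ) : Finset (ℕ × ℕ) :=
  (Icc 1 N ×ˢ Icc 1 N).filter fun p => Nat.gcd p.1 p.2 = 1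

lemma sum_filter_gcd_eq_sum_coprimePairs {M : Type*} [AddCommMonoid M] (F : ℕ → ℕ → M)
    {N d : ℕ} (hd : 0 < d) :
    ∑ p ∈ (Icc 1 N ×ˢ Icc 1 N).filter (fun p => Nat.gcd p.1 p.2 = d), F p.1 p.2
      = ∑ q ∈ coprimePairs (N / d), F (d * q.1) (d * q.2) := by
  refine Finset.sum_nbij' (fun p => (p.1 / d, p.2 / d)) (fun q => (d * q.1, d * q.2))
    ?_ ?_ ?_ ?_ ?_
  · rintro ⟨m, n⟩ hp
    simp only [mem_filter, mem_product, mem_Icc] at hp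
    obtain ⟨⟨⟨hm1, hmN⟩, hn1, hnN⟩, rfl⟩ := hp
    simp only [coprimePairs, mem_filter, mem_product, mem_Icc]
    refine ⟨⟨⟨?_, Nat.div_le_div_right hmN⟩, ?_, Nat.div_le_div_right hnN⟩,
      Nat.coprime_div_gcd_div_gcd hd⟩
    · exact Nat.div_pos (Nat.gcd_le_left n hm1) hd
    · exact Nat.div_pos (Nat.gcd_le_right m hn1) hd
  · rintro ⟨a, b⟩ hq
    simp only [coprimePairs, mem_filter, mem_product, mem_Icc] at hq
    obtain ⟨⟨⟨ha1, haN⟩, hb1, hbN⟩, hab⟩ := hq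
    simp only [mem_filter, mem_product, mem_Icc, Nat.gcd_mul_left, hab, mul_one]
    rw [Nat.le_div_iff_mul_le hd] at haN hbN
    refine ⟨⟨⟨Nat.mul_pos hd ha1, by linarith⟩, Nat.mul_pos hd hb1, by linarith⟩, trivial⟩
  · rintro ⟨m, n⟩ hp
    simp only [mem_filter] at hp
    simp [← hp.2, Nat.mul_div_cancel' (Nat.gcd_dvd_left m n),
      Nat.mul_div_cancel' (Nat.gcd_dvd_right m n)]
  · rintro ⟨a, b⟩ -
    simp [Nat.mul_div_cancel_left _ hd]
  · rintro ⟨m, n⟩ hp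
    simp only [mem_filter] at hp
    rw [← hp.2, Nat.mul_div_cancel' (Nat.gcd_dvd_left m n),
      Nat.mul_div_cancel' (Nat.gcd_dvd_right m n)]

theorem sum_Icc_Icc_eq_sum_coprimePairs {M : Type*} [AddCommMonoid M] (F : ℕ → ℕ → M)
    (N : ℕ) :
    ∑ m ∈ Icc 1 N, ∑ n ∈ Icc 1 N, F m n
      = ∑ d ∈ Icc 1 N, ∑ q ∈ coprimePairs (N / d), F (d * q.1) (d * q.2) := by
  rw [← Finset.sum_product' (f := F), ← Finset.sum_fiberwise_of_maps_to
    (g := fun p : ℕ × ℕ => Nat.gcd p.1 p.2) (t := Icc 1 N)]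
  · exact Finset.sum_congr rfl fun d hd =>
      sum_filter_gcd_eq_sum_coprimePairs F (mem_Icc.mp hd).1
  · rintro ⟨m, n⟩ hp
    simp only [mem_product, mem_Icc] at hp ⊢
    exact ⟨Nat.gcd_pos_of_pos_left n hp.1.1, (Nat.gcd_le_left n hp.1.1).trans hp.1.2⟩

lemma sum_divisors_moebius (n : ℕ) : ∑ d ∈ n.divisors, μ d = if n = 1 then 1 else 0 := by
  have h := congr($moebius_mul_coe_zeta n)
  rwa [coe_mul_zeta_apply, one_apply] at h

lemma card_filter_dvd_dvd (N d : ℕ) :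
    #{p ∈ Icc 1 N ×ˢ Icc 1 N | d ∣ p.1 ∧ d ∣ p.2} = (N / d) ^ 2 := by
  rw [filter_product, card_product, ← Nat.Ioc_filter_dvd_card_eq_div, sq]
  rfl

lemma card_coprimePairs (N : ℕ) :
    (#(coprimePairs N) : ℤ) = ∑ d ∈ Icc 1 N, μ d * ((N / d : ℕ) : ℤ) ^ 2 := by
  have hgcd : ∀ p ∈ Icc 1 N ×ˢ Icc 1 N,
      (if Nat.gcd p.1 p.2 = 1 then 1 else 0) = ∑ d ∈ Icc 1 N with d ∣ p.1 ∧ d ∣ p.2, μ d := by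
    rintro ⟨m, n⟩ hp
    simp only [mem_product, mem_Icc] at hp
    rw [← sum_divisors_moebius]
    congr 1
    ext d
    simp only [mem_filter, mem_Icc, Nat.mem_divisors, ← Nat.dvd_gcd_iff]
    have hg := Nat.gcd_pos_of_pos_left n hp.1.1
    have hgN := (Nat.gcd_le_left n hp.1.1).trans hp.1.2
    constructor
    · rintro ⟨hd, -⟩
      exact ⟨⟨Nat.pos_of_dvd_of_pos hd hg, (Nat.le_of_dvd hg hd).trans hgN⟩, hd⟩
    · rintro ⟨-, hd⟩
      exact ⟨hd, hg.ne'⟩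
  calc (#(coprimePairs N) : ℤ)
      = ∑ p ∈ Icc 1 N ×ˢ Icc 1 N, if Nat.gcd p.1 p.2 = 1 then 1 else 0 := by
        rw [coprimePairs, card_filter]; push_cast; rfl
    _ = ∑ p ∈ Icc 1 N ×ˢ Icc 1 N, ∑ d ∈ Icc 1 N with d ∣ p.1 ∧ d ∣ p.2, μ d := sum_congr rfl hgcd
    _ = ∑ d ∈ Icc 1 N, ∑ p ∈ Icc 1 N ×ˢ Icc 1 N with d ∣ p.1 ∧ d ∣ p.2, μ d :=
        sum_comm' (by simp only [mem_filter]; tauto)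
    _ = ∑ d ∈ Icc 1 N, μ d * ((N / d : ℕ) : ℤ) ^ 2 := by
        simp [card_filter_dvd_dvd, mul_comm]

lemma tsum_moebius_div_sq : ∑' d : ℕ, (μ d : ℝ) / d ^ 2 = 6 / π ^ 2 := by
  have h2 : 1 < (2 : ℂ).re := by norm_num
  have hL : L ↗μ 2 = 6 / (π : ℂ) ^ 2 := by
    have := LSeries_zeta_mul_Lseries_moebius h2
    rw [LSeries_zeta_eq_riemannZeta h2, riemannZeta_two] at this
    have hπ : (π : ℂ) ≠ 0 := Complex.ofReal_ne_zero.mpr pi_ne_zero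
    field_simp at this ⊢
    linear_combination this
  have hcast : ((∑' d : ℕ, (μ d : ℝ) / d ^ 2 : ℝ) : ℂ) = L ↗μ 2 := by
    rw [LSeries_def₀ (by simp), Complex.ofReal_tsum]
    push_cast
    simp [Complex.cpow_ofNat]
  exact_mod_cast hcast.trans hL

lemma card_coprimePairs_le (N : ℕ) : #(coprimePairs N) ≤ N ^ 2 :=
  (card_filter_le _ _).trans_eq (by simp [sq])

lemma tendsto_card_coprimePairs_div_sq :
    Tendsto (fun N : ℕ => (#(coprimePairs N) : ℝ) / N ^ 2) atTop (𝓝 (6 / π ^ 2)) := by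
  have hsq : Tendsto (fun M : ℕ => (M : ℝ) ^ 2 / M ^ 2) atTop (𝓝 1) :=
    tendsto_const_nhds.congr' <| (eventually_ne_atTop 0).mono fun M hM =>
      (div_self (by positivity)).symm
  have := tendsto_sum_mul_div_sq (a := fun d => (μ d : ℝ)) (A := 1) (B := 1)
    (fun d => by exact_mod_cast abs_moebius_le_one) (fun M => by simp) hsq
  rw [tsum_moebius_div_sq, mul_one] at this
  refine this.congr fun N => ?_
  have hcard := congrArg (Int.cast : ℤ → ℝ) (card_coprimePairs N)
  simp only [Int.cast_natCast, Int.cast_sum, Int.cast_mul, Int.cast_pow] at hcard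
  rw [hcard]

lemma tendsto_sum_coprimePairs_div_sq {g : ℕ × ℕ → ℝ} {l : ℝ}
    (hg : Tendsto (fun N : ℕ => (∑ p ∈ coprimePairs N, g p) / #(coprimePairs N)) atTop (𝓝 l)) :
    Tendsto (fun N : ℕ => (∑ p ∈ coprimePairs N, g p) / N ^ 2) atTop (𝓝 (6 / π ^ 2 * l)) := by
  refine (tendsto_card_coprimePairs_div_sq.mul hg).congr' ?_
  filter_upwards [eventually_ge_atTop 1] with N hN
  have : (1, 1) ∈ coprimePairs N := by simp [coprimePairs, hN]
  have hcard : (#(coprimePairs N) : ℝ) ≠ 0 := by exact_mod_cast (card_pos.mpr ⟨_, this⟩).ne'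
  field_simp

lemma abs_sum_coprimePairs_le {g : ℕ × ℕ → ℝ} {C : ℝ} (hg : ∀ p, |g p| ≤ C) (N : ℕ) :
    |∑ p ∈ coprimePairs N, g p| ≤ C * N ^ 2 := by
  have hC : 0 ≤ C := (abs_nonneg _).trans (hg 0)
  calc |∑ p ∈ coprimePairs N, g p| ≤ ∑ p ∈ coprimePairs N, |g p| := abs_sum_le_sum_abs _ _
    _ ≤ #(coprimePairs N) * C := by simpa using sum_le_card_nsmul _ _ _ fun p _ => hg p
    _ ≤ N ^ 2 * C := by gcongr; exact_mod_cast card_coprimePairs_le N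
    _ = C * N ^ 2 := mul_comm _ _

lemma sum_Icc_Icc_comp_Pval {f : ℕ → ℝ} (hf1 : f 1 = 1) (hfmul : ∀ m n, f (m * n) = f m * f n)
    {k : ℕ} {P : MvPolynomial (Fin 2) ℤ} (hP : P.IsHomogeneous k) (N : ℕ) :
    ∑ m ∈ Icc 1 N, ∑ n ∈ Icc 1 N, f (Pval P m n)
      = ∑ d ∈ Icc 1 N, f d ^ k * ∑ q ∈ coprimePairs (N / d), f (Pval P q.1 q.2) := by
  simp only [sum_Icc_Icc_eq_sum_coprimePairs, Pval_mul_mul hP, hfmul,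
    map_pow_of_map_mul hf1 hfmul, mul_sum]

theorem stmt4_general (f : ℕ → ℝ) (C : ℝ) (hfb : ∀ n, |f n| ≤ C)
    (hf1 : f 1 = 1) (hfmul : ∀ m n, f (m * n) = f m * f n)
    (k : ℕ) (P : MvPolynomial (Fin 2) ℤ) (hP : P.IsHomogeneous k)
    (L' : ℝ)
    (hL' : Tendsto (fun N : ℕ =>
        (∑ p ∈ (Finset.Icc 1 N ×ˢ Finset.Icc 1 N).filter (fun p => Nat.gcd p.1 p.2 = 1),
            f (Pval P p.1 p.2)) /
          (((Finset.Icc 1 N ×ˢ Finset.Icc 1 N).filter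
              (fun p => Nat.gcd p.1 p.2 = 1)).card : ℝ))
      atTop (nhds L')) :
    Tendsto (fun N : ℕ =>
        (∑ m ∈ Finset.Icc 1 N, ∑ n ∈ Finset.Icc 1 N, f (Pval P m n)) / (N : ℝ) ^ 2)
      atTop
      (nhds ((6 / Real.pi ^ 2) * (∑' n : ℕ, f n ^ k / (n : ℝ) ^ 2) * L')) := by
  have hfk : ∀ d, |f d ^ k| ≤ C ^ k := fun d => by
    rw [abs_pow]; exact pow_le_pow_left₀ (abs_nonneg _) (hfb d) k
  have hlim := tendsto_sum_mul_div_sq hfk (abs_sum_coprimePairs_le (fun p => hfb _))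
    (tendsto_sum_coprimePairs_div_sq hL')
  simp only [← sum_Icc_Icc_comp_Pval hf1 hfmul hP] at hlim
  convert hlim using 2
  ring

theorem stmt4 (f : ℕ → ℝ) (C : ℝ) (hfb : ∀ n, |f n| ≤ C)
    (hf1 : f 1 = 1) (hfmul : ∀ m n, f (m * n) = f m * f n)
    (k : ℕ) (P : MvPolynomial (Fin 2) ℤ) (hP : P.IsHomogeneous k)
    (hPnat : ∀ m n : ℕ, 1 ≤ m → 1 ≤ n → 0 ≤ MvPolynomial.eval ![(m : ℤ), (n : ℤ)] P)
    (L' : ℝ)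
    (hL' : Tendsto (fun N : ℕ =>
        (∑ p ∈ (Finset.Icc 1 N ×ˢ Finset.Icc 1 N).filter (fun p => Nat.gcd p.1 p.2 = 1),
            f (Pval P p.1 p.2)) /
          (((Finset.Icc 1 N ×ˢ Finset.Icc 1 N).filter
              (fun p => Nat.gcd p.1 p.2 = 1)).card : ℝ))
      atTop (nhds L')) :
    Tendsto (fun N : ℕ =>
        (∑ m ∈ Finset.Icc 1 N, ∑ n ∈ Finset.Icc 1 N, f (Pval P m n)) / (N : ℝ) ^ 2)
      atTop
      (nhds ((6 / Real.pi ^ 2) * (∑' n : ℕ, f n ^ k / (n : ℝ) ^ 2) * L')) :=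
  stmt4_general f C hfb hf1 hfmul k P hP L' hL'
end

section
/- Let r ≥ 2, let f_1, ..., f_ℓ be bounded completely multiplicative complex-valued functions, and let L_1, ..., L_ℓ : ℕ^r → ℕ be linear forms with positive integer coefficients. If the limit L' = lim_{N→∞} 𝔼_{m ∈ [N]^r, gcd(m)=1} ∏_{j=1}^ℓ f_j(L_j(m)) exists, then the limit lim_{N→∞} 𝔼_{m ∈ [N]^r} ∏_{j=1}^ℓ f_j(L_j(m)) exists and equals (1/ζ(r)) · (∑_{n=1}^∞ ∏_{j=1}^ℓ f_j(n) / n^r) · L'. -/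
open Filter Finset Real

/-- The real value of the Riemann zeta function at a natural number `r ≥ 2`. -/
noncomputable def zetaR (r : ℕ) : ℝ := ∑' n : ℕ, (1 : ℝ) / (n : ℝ) ^ r

/-!
Every point of `[N]^r` is uniquely `d • m` with `d` its gcd and `m` primitive, so complete
multiplicativity turns the sum over `[N]^r` into `∑_{d ≤ N} P(d) T(⌊N/d⌋)`, where `P = ∏ j, f j`
and `T(M)` is the sum over the primitive points of `[M]^r`. By hypothesis `T(M)` is `L' + o(1)`
times the number of primitive points, and these have density `1/ζ(r)`: Möbius inversion
gives the density `∑ μ(d)/d^r`, and the same decomposition applied to the constant function `1`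
shows that this is `1/ζ(r)`. The `d`-th term of the normalised sum is bounded by `d⁻ʳ`, so
dominated convergence over `d` gives the limit.
-/

open Topology

theorem norm_le_one_of_bounded_of_map_mul {M 𝕜 : Type*} [Monoid M] [NormedDivisionRing 𝕜]
    {f : M → 𝕜} {B : ℝ} (hfb : ∀ x, ‖f x‖ ≤ B) (hmul : ∀ x y, f (x * y) = f x * f y) (x : M) :
    ‖f x‖ ≤ 1 := by
  have hpow : ∀ k, f (x ^ (k + 1)) = f x ^ (k + 1) := by
    intro k
    induction k with
    | zero => simp
    | succ k ih => rw [pow_succ, hmul, ih, ← pow_succ]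
  by_contra! h
  obtain ⟨k, hk⟩ :=
    eventually_atTop.mp ((tendsto_pow_atTop_atTop_of_one_lt h).eventually_gt_atTop B)
  have := hfb (x ^ (k + 1))
  rw [hpow, norm_pow] at this
  linarith [hk (k + 1) k.le_succ]

def primitiveBox (r N : ℕ) : Finset (Fin r → ℕ) := {m ∈ box r N | univ.gcd m = 1}

theorem mem_box {r N : ℕ} {m : Fin r → ℕ} : m ∈ box r N ↔ ∀ i, m i ∈ Icc 1 N :=
  Fintype.mem_piFinset

theorem card_box (r N : ℕ) : #(box r N) = N ^ r := by
  simp [_root_.box]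

theorem card_primitiveBox_le (r N : ℕ) : #(primitiveBox r N) ≤ N ^ r :=
  (card_filter_le _ _).trans (card_box r N).le

theorem smul_mem_box_iff {r N d : ℕ} (hd : d ≠ 0) {m : Fin r → ℕ} :
    d • m ∈ box r N ↔ m ∈ box r (N / d) := by
  simp only [mem_box, mem_Icc, Pi.smul_apply, smul_eq_mul, Nat.le_div_iff_mul_le
    (Nat.pos_of_ne_zero hd), mul_comm d, Nat.one_le_iff_ne_zero, mul_ne_zero_iff, ne_eq, hd,
    not_false_eq_true, and_true]

theorem gcd_smul {ι : Type*} (s : Finset ι) (d : ℕ) (m : ι → ℕ) :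
    s.gcd (d • m) = d * s.gcd m :=
  (Finset.gcd_mul_left (s := s) (f := m) (a := d)).trans (by rw [normalize_eq])

theorem gcd_mem_Icc_of_mem_box {r N : ℕ} (hr : r ≠ 0) {m : Fin r → ℕ} (hm : m ∈ box r N) :
    univ.gcd m ∈ Icc 1 N := by
  have i₀ : Fin r := ⟨0, Nat.pos_of_ne_zero hr⟩
  obtain ⟨hm1, hmN⟩ := mem_Icc.mp (mem_box.mp hm i₀)
  have hdvd := univ.gcd_dvd (f := m) (mem_univ i₀)
  exact mem_Icc.mpr ⟨Nat.pos_of_dvd_of_pos hdvd hm1, (Nat.le_of_dvd hm1 hdvd).trans hmN⟩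

theorem sum_box_eq_sum_sum_primitiveBox {M : Type*} [AddCommMonoid M] {r : ℕ} (hr : r ≠ 0)
    (N : ℕ) (F : (Fin r → ℕ) → M) :
    ∑ m ∈ box r N, F m = ∑ d ∈ Icc 1 N, ∑ m ∈ primitiveBox r (N / d), F (d • m) := by
  rw [sum_sigma']
  symm
  refine sum_nbij' (fun p => p.1 • p.2) (fun m => ⟨univ.gcd m, fun i => m i / univ.gcd m⟩)
    ?_ ?_ ?_ ?_ fun _ _ => rfl
  · rintro ⟨d, m⟩ hp
    simp only [mem_sigma, mem_Icc, primitiveBox, mem_filter] at hp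
    exact (smul_mem_box_iff (d := d) (by omega)).mpr hp.2.1
  · intro m hm
    have i₀ : Fin r := ⟨0, Nat.pos_of_ne_zero hr⟩
    have hg := gcd_mem_Icc_of_mem_box hr hm
    have hmg : univ.gcd m • (fun i => m i / univ.gcd m) = m :=
      funext fun i => Nat.mul_div_cancel' (univ.gcd_dvd (mem_univ i))
    simp only [mem_sigma, primitiveBox, mem_filter]
    refine ⟨hg, (smul_mem_box_iff (Nat.one_le_iff_ne_zero.mp (mem_Icc.mp hg).1)).mp
      (by rwa [hmg]), ?_⟩
    exact univ.gcd_div_eq_one (mem_univ i₀)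
      (Nat.one_le_iff_ne_zero.mp (mem_Icc.mp (mem_box.mp hm i₀)).1)
  · rintro ⟨d, m⟩ hp
    simp only [mem_sigma, mem_Icc, primitiveBox, mem_filter] at hp
    have hg : univ.gcd (d • m) = d := by rw [gcd_smul, hp.2.2, mul_one]
    ext1
    · exact hg
    · simp only [hg]
      exact heq_of_eq (funext fun i => Nat.mul_div_cancel_left _ (by omega))
  · intro m _
    exact funext fun i => Nat.mul_div_cancel' (univ.gcd_dvd (mem_univ i))

theorem card_filter_forall_dvd_box {r N d : ℕ} (hd : d ≠ 0) :
    #{m ∈ box r N | ∀ i, d ∣ m i} = (N / d) ^ r := by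
  have : {m ∈ box r N | ∀ i, d ∣ m i} = (box r (N / d)).image (d • ·) := by
    ext m
    simp only [mem_filter, mem_image]
    constructor
    · rintro ⟨hm, hdvd⟩
      have hm' : d • (fun i => m i / d) = m := funext fun i => Nat.mul_div_cancel' (hdvd i)
      exact ⟨_, (smul_mem_box_iff hd).mp (by rwa [hm']), hm'⟩
    · rintro ⟨m, hm, rfl⟩
      exact ⟨(smul_mem_box_iff hd).mpr hm, fun i => dvd_mul_right d (m i)⟩
  rw [this, card_image_of_injective _ (smul_right_injective _ hd), card_box]

open ArithmeticFunction in
theorem card_primitiveBox_eq_sum_moebius {r : ℕ} (hr : r ≠ 0) (N : ℕ) :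
    (#(primitiveBox r N) : ℤ) = ∑ d ∈ Icc 1 N, moebius d * ((N / d : ℕ) : ℤ) ^ r := by
  have hind : ∀ m ∈ box r N,
      (if univ.gcd m = 1 then 1 else 0 : ℤ) = ∑ d ∈ Icc 1 N with d ∣ univ.gcd m, moebius d := by
    intro m hm
    obtain ⟨hg1, hgN⟩ := mem_Icc.mp (gcd_mem_Icc_of_mem_box hr hm)
    have hdiv : {d ∈ Icc 1 N | d ∣ univ.gcd m} = (univ.gcd m).divisors := by
      ext d
      simp only [mem_filter, mem_Icc, Nat.mem_divisors]
      constructor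
      · rintro ⟨-, hd⟩
        exact ⟨hd, by omega⟩
      · rintro ⟨hd, -⟩
        exact ⟨⟨Nat.pos_of_dvd_of_pos hd hg1, (Nat.le_of_dvd hg1 hd).trans hgN⟩, hd⟩
    rw [hdiv, ← coe_mul_zeta_apply, moebius_mul_coe_zeta, one_apply]
  calc (#(primitiveBox r N) : ℤ) = ∑ m ∈ box r N, if univ.gcd m = 1 then 1 else 0 := by
        rw [primitiveBox, card_filter]
        push_cast
        rfl
    _ = ∑ d ∈ Icc 1 N, ∑ m ∈ box r N with d ∣ univ.gcd m, moebius d := by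
        rw [sum_congr rfl hind]
        simp_rw [sum_filter]
        exact sum_comm
    _ = ∑ d ∈ Icc 1 N, moebius d * ((N / d : ℕ) : ℤ) ^ r := by
        refine sum_congr rfl fun d hd => ?_
        simp_rw [Finset.dvd_gcd_iff, mem_univ, true_implies]
        rw [sum_const, card_filter_forall_dvd_box (by simp at hd; omega), nsmul_eq_mul,
          Nat.cast_pow, mul_comm]

theorem tendsto_natCast_div_div_natCast (d : ℕ) :
    Tendsto (fun N : ℕ => ((N / d : ℕ) : ℝ) / N) atTop (𝓝 (1 / d)) := by
  rcases eq_or_ne d 0 with rfl | hd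
  · simp
  have hd' : (0 : ℝ) < d := by positivity
  have h := ((tendsto_nat_floor_div_atTop (R := ℝ)).comp
    ((tendsto_natCast_atTop_atTop (R := ℝ)).atTop_div_const hd')).div_const (d : ℝ)
  refine h.congr' ?_
  filter_upwards [eventually_ne_atTop 0] with N hN
  simp only [Function.comp_apply, Nat.floor_div_eq_div]
  field_simp

section

variable {𝕜 : Type*} [RCLike 𝕜]

theorem norm_mul_apply_div_div_pow_le {r : ℕ} {c g : ℕ → 𝕜}
    (hc : ∀ d, ‖c d‖ ≤ 1) (hg : ∀ M, ‖g M‖ ≤ (M : ℝ) ^ r) (N d : ℕ) :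
    ‖c d * g (N / d) / (N : 𝕜) ^ r‖ ≤ 1 / (d : ℝ) ^ r := by
  rw [norm_div, norm_mul, norm_pow, RCLike.norm_natCast]
  rcases eq_or_ne ((N : ℝ) ^ r) 0 with hN | hN
  · rw [hN, div_zero]
    positivity
  calc ‖c d‖ * ‖g (N / d)‖ / (N : ℝ) ^ r ≤ 1 * ((N : ℝ) / d) ^ r / (N : ℝ) ^ r := by
        gcongr
        · exact hc d
        · exact (hg _).trans (pow_le_pow_left₀ (by positivity) Nat.cast_div_le r)
    _ = 1 / (d : ℝ) ^ r := by
        rw [div_pow]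
        field_simp

theorem tendsto_sum_Icc_mul_apply_div_div_pow {r : ℕ} (hr : 2 ≤ r) {c g : ℕ → 𝕜} {L : 𝕜}
    (hc : ∀ d, ‖c d‖ ≤ 1) (hg : ∀ M, ‖g M‖ ≤ (M : ℝ) ^ r)
    (hgL : Tendsto (fun M : ℕ => g M / (M : 𝕜) ^ r) atTop (𝓝 L)) :
    Tendsto (fun N : ℕ => (∑ d ∈ Icc 1 N, c d * g (N / d)) / (N : 𝕜) ^ r) atTop
      (𝓝 ((∑' d : ℕ, c d / (d : 𝕜) ^ r) * L)) := by
  have hr0 : r ≠ 0 := by omega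
  -- `hg` forces `g 0 = 0`, so the terms with `d = 0` or `d > N` vanish.
  have hg0 : g 0 = 0 := norm_le_zero_iff.mp (by simpa [hr0] using hg 0)
  have hsum : ∀ N : ℕ, (∑ d ∈ Icc 1 N, c d * g (N / d)) / (N : 𝕜) ^ r =
      ∑' d, c d * g (N / d) / (N : 𝕜) ^ r := by
    intro N
    rw [sum_div, tsum_eq_sum fun d hd => ?_]
    have : N / d = 0 := by
      rcases eq_or_ne d 0 with rfl | hd0
      · exact Nat.div_zero N
      · exact Nat.div_eq_of_lt (by simp at hd; omega)
    simp [this, hg0]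
  simp_rw [hsum, ← tsum_mul_right]
  refine tendsto_tsum_of_dominated_convergence (summable_one_div_nat_pow.mpr hr)
    (fun d => ?_) (Eventually.of_forall fun N d => norm_mul_apply_div_div_pow_le hc hg N d)
  rcases eq_or_ne d 0 with rfl | hd
  · simp [hg0, hr0]
  have hq : Tendsto (fun N : ℕ => ((((N / d : ℕ) : ℝ) / N : ℝ) : 𝕜) ^ r) atTop
      (𝓝 (((1 / d : ℝ) : 𝕜) ^ r)) :=
    ((RCLike.continuous_ofReal.tendsto _).comp (tendsto_natCast_div_div_natCast d)).pow r
  have hlim := ((hgL.comp (Nat.tendsto_div_const_atTop hd)).mul hq).const_mul (c d)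
  convert hlim.congr' ?_ using 2
  · push_cast
    ring
  filter_upwards [eventually_ge_atTop d] with N hN
  have hM : ((N / d : ℕ) : 𝕜) ≠ 0 := Nat.cast_ne_zero.mpr (Nat.div_pos hN (by omega)).ne'
  have hN : (N : 𝕜) ≠ 0 := Nat.cast_ne_zero.mpr (by omega)
  simp only [Function.comp_apply]
  push_cast
  rw [div_pow]
  field_simp

theorem tendsto_card_primitiveBox_div_pow_tsum_moebius {r : ℕ} (hr : 2 ≤ r) :
    Tendsto (fun N : ℕ => (#(primitiveBox r N) : 𝕜) / (N : 𝕜) ^ r) atTop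
      (𝓝 (∑' d : ℕ, (ArithmeticFunction.moebius d : 𝕜) / (d : 𝕜) ^ r)) := by
  have hcard : ∀ N : ℕ, (#(primitiveBox r N) : 𝕜) =
      ∑ d ∈ Icc 1 N, (ArithmeticFunction.moebius d : 𝕜) * ((N / d : ℕ) : 𝕜) ^ r := fun N => by
    have h := congrArg (Int.cast : ℤ → 𝕜)
      (card_primitiveBox_eq_sum_moebius (r := r) (by omega) N)
    simpa only [Int.cast_natCast, Int.cast_sum, Int.cast_mul, Int.cast_pow] using h
  have hpow : Tendsto (fun M : ℕ => (M : 𝕜) ^ r / (M : 𝕜) ^ r) atTop (𝓝 1) :=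
    tendsto_const_nhds.congr' <| (eventually_ne_atTop 0).mono fun M hM =>
      (div_self (pow_ne_zero _ (Nat.cast_ne_zero.mpr hM))).symm
  have hmoeb : ∀ d, ‖(ArithmeticFunction.moebius d : 𝕜)‖ ≤ 1 := fun d => by
    rw [← RCLike.ofReal_intCast, RCLike.norm_ofReal]
    exact_mod_cast ArithmeticFunction.abs_moebius_le_one
  simpa only [hcard, mul_one] using tendsto_sum_Icc_mul_apply_div_div_pow hr hmoeb
    (fun M => by simp) hpow

theorem zetaR_mul_tsum_moebius_div_pow {r : ℕ} (hr : 2 ≤ r) :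
    (zetaR r : 𝕜) * ∑' d : ℕ, (ArithmeticFunction.moebius d : 𝕜) / (d : 𝕜) ^ r = 1 := by
  have hlim := tendsto_sum_Icc_mul_apply_div_div_pow hr (c := fun _ => (1 : 𝕜))
    (g := fun M => (#(primitiveBox r M) : 𝕜)) (fun _ => by simp)
    (fun M => by rw [RCLike.norm_natCast]; exact_mod_cast card_primitiveBox_le r M)
    (tendsto_card_primitiveBox_div_pow_tsum_moebius hr)
  have hone : ∀ᶠ N : ℕ in atTop,
      (∑ d ∈ Icc 1 N, 1 * (#(primitiveBox r (N / d)) : 𝕜)) / (N : 𝕜) ^ r = 1 := by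
    filter_upwards [eventually_ne_atTop 0] with N hN
    have hcount := sum_box_eq_sum_sum_primitiveBox (r := r) (by omega) N fun _ => (1 : 𝕜)
    simp only [sum_const, card_box, nsmul_eq_mul, mul_one] at hcount
    rw [div_eq_one_iff_eq (pow_ne_zero _ (Nat.cast_ne_zero.mpr hN))]
    simpa using hcount.symm
  have hζ : (zetaR r : 𝕜) = ∑' d : ℕ, 1 / (d : 𝕜) ^ r := by
    rw [zetaR, RCLike.ofReal_tsum]
    push_cast
    rfl
  rw [hζ]
  exact tendsto_nhds_unique hlim (tendsto_const_nhds.congr' (hone.mono fun _ h => h.symm))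

theorem tendsto_card_primitiveBox_div_pow {r : ℕ} (hr : 2 ≤ r) :
    Tendsto (fun N : ℕ => (#(primitiveBox r N) : 𝕜) / (N : 𝕜) ^ r) atTop
      (𝓝 (1 / (zetaR r : 𝕜))) := by
  rw [← eq_one_div_of_mul_eq_one_right (zetaR_mul_tsum_moebius_div_pow hr)]
  exact tendsto_card_primitiveBox_div_pow_tsum_moebius hr

theorem tendsto_average_box_of_tendsto_average_primitiveBox {r : ℕ} (hr : 2 ≤ r)
    {F : (Fin r → ℕ) → 𝕜} {P : ℕ → 𝕜} {L : 𝕜} (hF : ∀ m, ‖F m‖ ≤ 1) (hP : ∀ d, ‖P d‖ ≤ 1)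
    (hFP : ∀ d m, F (d • m) = P d * F m)
    (hL : Tendsto (fun N : ℕ => (∑ m ∈ primitiveBox r N, F m) / (#(primitiveBox r N) : 𝕜))
      atTop (𝓝 L)) :
    Tendsto (fun N : ℕ => (∑ m ∈ box r N, F m) / (#(box r N) : 𝕜)) atTop
      (𝓝 (1 / (zetaR r : 𝕜) * (∑' d : ℕ, P d / (d : 𝕜) ^ r) * L)) := by
  set T : ℕ → 𝕜 := fun M => ∑ m ∈ primitiveBox r M, F m
  have hT : ∀ M, ‖T M‖ ≤ (M : ℝ) ^ r := fun M =>
    (norm_sum_le_of_le _ fun m _ => hF m).trans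
      (by rw [sum_const, nsmul_one]; exact_mod_cast card_primitiveBox_le r M)
  have hTL : Tendsto (fun M : ℕ => T M / (M : 𝕜) ^ r) atTop
      (𝓝 (L * (1 / (zetaR r : 𝕜)))) := by
    refine (hL.mul (tendsto_card_primitiveBox_div_pow hr)).congr fun M => ?_
    rcases eq_or_ne #(primitiveBox r M) 0 with h | h
    · simp [T, card_eq_zero.mp h]
    · exact div_mul_div_cancel₀ (by simpa using h)
  have hsum : ∀ N, ∑ m ∈ box r N, F m = ∑ d ∈ Icc 1 N, P d * T (N / d) := fun N => by
    simp only [sum_box_eq_sum_sum_primitiveBox (by omega : r ≠ 0) N, hFP, T, mul_sum]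
  simp only [hsum, card_box, Nat.cast_pow]
  convert tendsto_sum_Icc_mul_apply_div_div_pow hr hP hT hTL using 2
  ring

end

theorem stmt10_general (r ℓ : ℕ) (hr : 2 ≤ r)
    (f : Fin ℓ → ℕ → ℂ) (B : ℝ) (hfb : ∀ j n, ‖f j n‖ ≤ B)
    (hfmul : ∀ j m n, f j (m * n) = f j m * f j n)
    (k : Fin ℓ → Fin r → ℕ)
    (L' : ℂ)
    (hL' : Tendsto (fun N : ℕ =>
        (∑ m ∈ (box r N).filter (fun m => Finset.univ.gcd m = 1),
            ∏ j, f j (∑ i, k j i * m i)) /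
          (((box r N).filter (fun m => Finset.univ.gcd m = 1)).card : ℂ))
      atTop (nhds L')) :
    Tendsto (fun N : ℕ =>
        (∑ m ∈ box r N, ∏ j, f j (∑ i, k j i * m i)) / ((box r N).card : ℂ))
      atTop
      (nhds ((1 / (zetaR r : ℂ)) *
        (∑' n : ℕ, (∏ j, f j n) / (n : ℂ) ^ r) * L')) := by
  have hf : ∀ j n, ‖f j n‖ ≤ 1 := fun j => norm_le_one_of_bounded_of_map_mul (hfb j) (hfmul j)
  have hprod : ∀ n : Fin ℓ → ℕ, ‖∏ j, f j (n j)‖ ≤ 1 := fun n => by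
    rw [norm_prod]
    exact prod_le_one (fun _ _ => norm_nonneg _) fun j _ => hf j _
  refine tendsto_average_box_of_tendsto_average_primitiveBox hr (fun m => hprod _)
    (fun d => hprod fun _ => d) (fun d m => ?_) hL'
  simp only [Pi.smul_apply, smul_eq_mul, mul_left_comm _ d, ← mul_sum, hfmul, prod_mul_distrib]

theorem stmt10 (r ℓ : ℕ) (hr : 2 ≤ r)
    (f : Fin ℓ → ℕ → ℂ) (B : ℝ) (hfb : ∀ j n, ‖f j n‖ ≤ B)
    (hf1 : ∀ j, f j 1 = 1) (hfmul : ∀ j m n, f j (m * n) = f j m * f j n)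
    (k : Fin ℓ → Fin r → ℕ) (hk : ∀ j i, 1 ≤ k j i)
    (L' : ℂ)
    (hL' : Tendsto (fun N : ℕ =>
        (∑ m ∈ (box r N).filter (fun m => Finset.univ.gcd m = 1),
            ∏ j, f j (∑ i, k j i * m i)) /
          (((box r N).filter (fun m => Finset.univ.gcd m = 1)).card : ℂ))
      atTop (nhds L')) :
    Tendsto (fun N : ℕ =>
        (∑ m ∈ box r N, ∏ j, f j (∑ i, k j i * m i)) / ((box r N).card : ℂ))
      atTop
      (nhds ((1 / (zetaR r : ℂ)) *
        (∑' n : ℕ, (∏ j, f j n) / (n : ℂ) ^ r) * L')) :=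
  stmt10_general r ℓ hr f B hfb hfmul k L' hL'
end
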